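/- arXiv:2501.13202 — 8 statements merged into one kernel-verified Lean document; each statement's English description precedes it below -/
import Mathlib

section
/- Let (X,d) be a distance space. For every f ∈ P_d there exists g ∈ T_d with g ⪯ f (i.e., every element of P_d dominates a minimal element). -/
open scoped ENNReal

section CoreDefs

variable {Y : Type*}

/-- A distance space: symmetric, nonnegative, vanishing on the diagonal. -/
def IsDistance (d : Y → Y → ℝ) : Prop :=
  (∀ x y, 0 ≤ d x y) ∧ (∀ x y, d x y = d y x) ∧ ∀ x, d x x = 0

/-- The set `P_d` of functions dominating the distance `d`. -/
def Pd (d : Y → Y → ℝ) : Set (Y → ℝ) :=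
  {f | ∀ x y, d x y ≤ f x + f y}

/-- The tight span `T_d`: pointwise-minimal elements of `P_d`. -/
def Td (d : Y → Y → ℝ) : Set (Y → ℝ) :=
  {f | f ∈ Pd d ∧ ∀ g ∈ Pd d, g ≤ f → g = f}

/-- The sup-distance `d∞(f,g) = sup_x |f x - g x|`, valued in `[0,∞]`. -/
noncomputable def dInfty (f g : Y → ℝ) : ℝ≥0∞ :=
  ⨆ y, edist (f y) (g y)

/-- `κ(x) = {f ∈ T_d : f x = 0}`. -/
def kappa (d : Y → Y → ℝ) (x : Y) : Set (Y → ℝ) :=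
  {f | f ∈ Td d ∧ f x = 0}

/-- A pseudometric: symmetric, nonnegative, vanishing on the diagonal,
satisfying the triangle inequality. -/
def IsPseudometric (ρ : Y → Y → ℝ) : Prop :=
  (∀ x y, 0 ≤ ρ x y) ∧ (∀ x y, ρ x y = ρ y x) ∧ (∀ x, ρ x x = 0) ∧
  ∀ x y z, ρ x z ≤ ρ x y + ρ y z

/-- `M(d)`: the set of pseudometrics dominating `d`. -/
def Md (d : Y → Y → ℝ) : Set (Y → Y → ℝ) :=
  {ρ | IsPseudometric ρ ∧ ∀ x y, d x y ≤ ρ x y}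

end CoreDefs

/-!
Zorn's lemma, applied to `P_d` ordered by `⪰`. A chain `c ⊆ P_d` is bounded below pointwise
by `0` (as `2 f x ≥ d x x ≥ 0`), and its pointwise infimum stays in `P_d`: for `h₁, h₂ ∈ c` the
smaller of the two is below both, so `d x y ≤ h₁ x + h₂ y`, and taking infima in `h₁` and then
in `h₂` gives `d x y ≤ (inf c) x + (inf c) y`.
-/

section TightSpan

variable {X : Type*} {d : X → X → ℝ}

theorem Pd.nonneg (hd : ∀ x, 0 ≤ d x x) {f : X → ℝ} (hf : f ∈ Pd d) (x : X) : 0 ≤ f x := by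
  linarith [hd x, hf x x]

theorem mem_Td_iff_minimal {f : X → ℝ} : f ∈ Td d ↔ Minimal (· ∈ Pd d) f :=
  ⟨fun ⟨hf, hmin⟩ => ⟨hf, fun _ hg hgf => (hmin _ hg hgf).ge⟩,
    fun hf => ⟨hf.prop, fun _ hg hgf => hf.eq_of_le hg hgf⟩⟩

theorem Pd.le_add_of_isChain {c : Set (X → ℝ)} (hc : c ⊆ Pd d) (hchain : IsChain (· ≤ ·) c)
    {f g : X → ℝ} (hf : f ∈ c) (hg : g ∈ c) (x y : X) : d x y ≤ f x + g y := by
  rcases hchain.total hf hg with hfg | hgf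
  · linarith [hc hf x y, hfg y]
  · linarith [hc hg x y, hgf x]

theorem Pd.bddBelow_range_apply (hd : ∀ x, 0 ≤ d x x) {c : Set (X → ℝ)} (hc : c ⊆ Pd d)
    (x : X) : BddBelow (Set.range fun f : c => (f : X → ℝ) x) :=
  ⟨0, by rintro _ ⟨f, rfl⟩; exact Pd.nonneg hd (hc f.2) x⟩

theorem iInf_mem_Pd_of_isChain {c : Set (X → ℝ)} [Nonempty c]
    (hc : c ⊆ Pd d) (hchain : IsChain (· ≤ ·) c) : (fun x => ⨅ f : c, (f : X → ℝ) x) ∈ Pd d := by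
  intro x y
  have hleft : ∀ g : c, d x y - (g : X → ℝ) y ≤ ⨅ f : c, (f : X → ℝ) x := fun g =>
    le_ciInf fun f => by linarith [Pd.le_add_of_isChain hc hchain f.2 g.2 x y]
  have hright : d x y - ⨅ f : c, (f : X → ℝ) x ≤ ⨅ g : c, (g : X → ℝ) y :=
    le_ciInf fun g => by linarith [hleft g]
  linarith

theorem Pd.exists_le_of_isChain (hd : ∀ x, 0 ≤ d x x) {c : Set (X → ℝ)} (hc : c ⊆ Pd d)
    (hchain : IsChain (· ≤ ·) c) (hne : c.Nonempty) : ∃ g ∈ Pd d, ∀ f ∈ c, g ≤ f :=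
  have : Nonempty c := hne.to_subtype
  ⟨_, iInf_mem_Pd_of_isChain hc hchain,
    fun f hf x => ciInf_le (Pd.bddBelow_range_apply hd hc x) ⟨f, hf⟩⟩

end TightSpan

theorem statement0_general {X : Type*} (d : X → X → ℝ)
    (hd : IsDistance d) (f : X → ℝ) (hf : f ∈ Pd d) :
    ∃ g ∈ Td d, g ≤ f := by
  have hdiag : ∀ x, 0 ≤ d x x := fun x => (hd.2.2 x).ge
  obtain ⟨g, hgf, hg⟩ := zorn_le_nonempty₀ (α := (X → ℝ)ᵒᵈ) (Pd d)
    (fun c hc hchain y hy => Pd.exists_le_of_isChain hdiag hc hchain.symm ⟨y, hy⟩) f hf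
  exact ⟨g, mem_Td_iff_minimal.2 hg.of_dual, hgf⟩

/-- Every element of `P_d` dominates a minimal element, i.e. an element of
the tight span `T_d`. -/
theorem statement0 {X : Type*} [Nonempty X] (d : X → X → ℝ)
    (hd : IsDistance d) (f : X → ℝ) (hf : f ∈ Pd d) :
    ∃ g ∈ Td d, g ≤ f :=
  statement0_general d hd f hf
end

section
/- Let (X,d) be a distance space and f : X → ℝ. Then f ∈ T_d if and only if f(x) = sup{d(x,y) − f(y) : y ∈ X} for all x ∈ X. -/
open scoped ENNReal

/-! A function in `P_d` can be lowered at a single point `x` to any value that still dominates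
`d x y - f y` for every `y`. Minimality in `P_d` therefore pins `f x` at the least such value,
the supremum; conversely, if every `f x` is that supremum, any `g ∈ P_d` below `f` is an upper
bound for the same sets and so cannot lie strictly below `f`. -/

section TightSpan

variable {X : Type*} {d : X → X → ℝ} {f g : X → ℝ}

theorem mem_Pd_iff_forall_mem_upperBounds :
    f ∈ Pd d ↔ ∀ x, f x ∈ upperBounds {r : ℝ | ∃ y : X, r = d x y - f y} := by
  refine ⟨fun hf x r ⟨y, hr⟩ => ?_, fun h x y => ?_⟩
  · linarith [hf x y]
  · linarith [h x ⟨y, rfl⟩]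

theorem mem_upperBounds_of_mem_Pd_of_le (hg : g ∈ Pd d) (hgf : g ≤ f) (x : X) :
    g x ∈ upperBounds {r : ℝ | ∃ y : X, r = d x y - f y} := by
  rintro r ⟨y, rfl⟩
  linarith [hg x y, hgf y]

theorem update_mem_Pd [DecidableEq X] (hsym : ∀ x y, d x y = d y x) (hf : f ∈ Pd d)
    {x : X} {c : ℝ}
    (hc : c ∈ upperBounds {r : ℝ | ∃ y : X, r = d x y - f y}) (hcx : d x x ≤ c + c) :
    Function.update f x c ∈ Pd d := by
  intro u v
  simp only [Function.update_apply]
  split_ifs with hu hv hv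
  · subst hu hv; exact hcx
  · subst hu; linarith [hc ⟨v, rfl⟩]
  · subst hv; linarith [hc ⟨u, rfl⟩, hsym u v]
  · exact hf u v

theorem le_of_mem_Td_of_mem_upperBounds [DecidableEq X] (hsym : ∀ x y, d x y = d y x)
    (hf : f ∈ Td d) {x : X} {c : ℝ}
    (hc : c ∈ upperBounds {r : ℝ | ∃ y : X, r = d x y - f y})
    (hcx : d x x ≤ c + c) (hcf : c ≤ f x) : f x ≤ c := by
  have hle : Function.update f x c ≤ f := update_le_self_iff.2 hcf
  simpa using (congrFun (hf.2 _ (update_mem_Pd hsym hf.1 hc hcx) hle) x).ge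

theorem isLUB_of_mem_Td (hd : IsDistance d) (hf : f ∈ Td d) (x : X) :
    IsLUB {r : ℝ | ∃ y : X, r = d x y - f y} (f x) := by
  classical
  obtain ⟨-, hsym, hdiag⟩ := hd
  have hub := mem_Pd_iff_forall_mem_upperBounds.1 hf.1 x
  refine ⟨hub, fun b hb => ?_⟩
  have hfx : 0 ≤ f x := by linarith [hf.1 x x, hdiag x]
  have hbx : -f x ≤ b := hb ⟨x, by rw [hdiag]; ring⟩
  -- `max b 0` keeps the diagonal constraint `d x x ≤ 2 c` when lowering `f x`.
  have hc : min (f x) (max b 0) ∈ upperBounds {r : ℝ | ∃ y : X, r = d x y - f y} :=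
    fun r hr => le_min (hub hr) ((hb hr).trans (le_max_left b 0))
  have hfxb := le_of_mem_Td_of_mem_upperBounds hsym hf hc
    (by rw [hdiag]; positivity) (min_le_left _ _)
  rcases le_total 0 b with hb0 | hb0
  · simpa [max_eq_left hb0] using hfxb
  · simp only [max_eq_right hb0] at hfxb
    linarith [min_le_right (f x) 0]

theorem mem_Td_of_forall_isLUB (h : ∀ x, IsLUB {r : ℝ | ∃ y : X, r = d x y - f y} (f x)) :
    f ∈ Td d :=
  ⟨mem_Pd_iff_forall_mem_upperBounds.2 fun x => (h x).1, fun _g hg hgf =>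
    funext fun x => (hgf x).antisymm ((h x).2 (mem_upperBounds_of_mem_Pd_of_le hg hgf x))⟩

end TightSpan

theorem statement1_general {X : Type*} (d : X → X → ℝ)
    (hd : IsDistance d) (f : X → ℝ) :
    f ∈ Td d ↔ ∀ x : X, IsLUB {r : ℝ | ∃ y : X, r = d x y - f y} (f x) :=
  ⟨fun hf => isLUB_of_mem_Td hd hf, mem_Td_of_forall_isLUB⟩

/-- `f ∈ T_d` iff `f x = sup {d x y - f y : y ∈ X}` for all `x`. -/
theorem statement1 {X : Type*} [Nonempty X] (d : X → X → ℝ)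
    (hd : IsDistance d) (f : X → ℝ) :
    f ∈ Td d ↔ ∀ x : X, IsLUB {r : ℝ | ∃ y : X, r = d x y - f y} (f x) :=
  statement1_general d hd f
end

section
/- Let (X,d) be a distance space. If M(d) is empty then P_d and T_d are empty. If M(d) is non-empty then P_d = ⋃_{ρ∈M(d)} P_ρ and T_d ⊆ ⋃_{ρ∈M(d)} T_ρ. -/
open scoped ENNReal

/-- The path metric of a star whose leg to `x` has length `f x`. -/
noncomputable def starDist {Y : Type*} [DecidableEq Y] (f : Y → ℝ) : Y → Y → ℝ :=
  fun x y => if x = y then 0 else f x + f y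

section StarDist

variable {Y : Type*} [DecidableEq Y] {f : Y → ℝ}

theorem starDist_isPseudometric (hf : ∀ x, 0 ≤ f x) : IsPseudometric (starDist f) := by
  refine ⟨fun x y => ?_, fun x y => ?_, fun x => if_pos rfl, fun x y z => ?_⟩
  · unfold starDist
    split_ifs
    exacts [le_rfl, add_nonneg (hf x) (hf y)]
  · unfold starDist
    split_ifs <;> grind
  · have := hf y
    unfold starDist
    split_ifs <;> grind

theorem mem_Pd_starDist (hf : ∀ x, 0 ≤ f x) : f ∈ Pd (starDist f) := by
  intro x y
  unfold starDist
  split_ifs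
  exacts [add_nonneg (hf x) (hf y), le_rfl]

end StarDist

section TightSpan

variable {Y : Type*} {d ρ : Y → Y → ℝ} {f : Y → ℝ}

theorem nonneg_of_mem_Pd (hd : ∀ x, d x x = 0) (hf : f ∈ Pd d) (x : Y) : 0 ≤ f x := by
  linarith [hf x x, hd x]

theorem Pd_subset_Pd (hρ : ∀ x y, d x y ≤ ρ x y) : Pd ρ ⊆ Pd d :=
  fun _ hg x y => (hρ x y).trans (hg x y)

theorem mem_Td_of_Pd_subset (hPd : Pd ρ ⊆ Pd d) (hf : f ∈ Td d) (hfρ : f ∈ Pd ρ) : f ∈ Td ρ :=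
  ⟨hfρ, fun g hg hgf => hf.2 g (hPd hg) hgf⟩

theorem starDist_mem_Md [DecidableEq Y] (hd : ∀ x, d x x = 0) (hf : f ∈ Pd d) : starDist f ∈ Md d := by
  refine ⟨starDist_isPseudometric (nonneg_of_mem_Pd hd hf), fun x y => ?_⟩
  unfold starDist
  split_ifs with hxy
  · exact hxy ▸ (hd x).le
  · exact hf x y

theorem Pd_eq_biUnion_Md (hd : ∀ x, d x x = 0) : Pd d = ⋃ ρ ∈ Md d, Pd ρ := by
  classical
  refine Set.Subset.antisymm (fun f hf => ?_) (Set.iUnion₂_subset fun ρ hρ => Pd_subset_Pd hρ.2)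
  exact Set.mem_biUnion (starDist_mem_Md hd hf) (mem_Pd_starDist (nonneg_of_mem_Pd hd hf))

theorem Td_subset_biUnion_Md (hd : ∀ x, d x x = 0) : Td d ⊆ ⋃ ρ ∈ Md d, Td ρ := by
  classical
  exact fun _ hf => Set.mem_biUnion (starDist_mem_Md hd hf.1) <|
    mem_Td_of_Pd_subset (Pd_subset_Pd (starDist_mem_Md hd hf.1).2) hf
      (mem_Pd_starDist (nonneg_of_mem_Pd hd hf.1))

end TightSpan

theorem statement3_general {X : Type*} (d : X → X → ℝ)
    (hd : IsDistance d) :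
    (Md d = ∅ → Pd d = ∅ ∧ Td d = ∅) ∧
    ((Md d).Nonempty →
      (Pd d = ⋃ ρ ∈ Md d, Pd ρ) ∧ (Td d ⊆ ⋃ ρ ∈ Md d, Td ρ)) := by
  have hPd := Pd_eq_biUnion_Md hd.2.2
  refine ⟨fun hMd => ?_, fun _ => ⟨hPd, Td_subset_biUnion_Md hd.2.2⟩⟩
  have hPd_empty : Pd d = ∅ := by simpa [hMd] using hPd
  exact ⟨hPd_empty, Set.subset_eq_empty (fun f hf => hf.1) hPd_empty⟩

/-- If `M(d)` is empty then so are `P_d` and `T_d`; otherwise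
`P_d = ⋃_{ρ ∈ M(d)} P_ρ` and `T_d ⊆ ⋃_{ρ ∈ M(d)} T_ρ`. -/
theorem statement3 {X : Type*} [Nonempty X] (d : X → X → ℝ)
    (hd : IsDistance d) :
    (Md d = ∅ → Pd d = ∅ ∧ Td d = ∅) ∧
    ((Md d).Nonempty →
      (Pd d = ⋃ ρ ∈ Md d, Pd ρ) ∧ (Td d ⊆ ⋃ ρ ∈ Md d, Td ρ)) :=
  statement3_general d hd
end

section
/- Let (X,d) be a distance space with M(d) non-empty. Then for all x,y ∈ X there exists ρ ∈ M(d) such that ρ(x,y) = d(x,y). -/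
open scoped ENNReal

/-!
Fix `σ ∈ M(d)` and `x, y`. Put `f = d(x,y)/2` at `x` and `y` and `f a = σ(a,x) + σ(a,y)`
elsewhere. The triangle inequality for `σ` (through `x`) gives `d(a,b) ≤ f a + f b` for all
`a, b`, so for `f ≥ 0` the pseudometric `ρ(a,b) = f a + f b` (`a ≠ b`), `ρ(a,a) = 0`
dominates `d`, and `ρ(x,y) = d(x,y)`.
-/

open Classical in
noncomputable def pairSumDist {Y : Type*} (f : Y → ℝ) (a b : Y) : ℝ :=
  if a = b then 0 else f a + f b

section PairSumDist

variable {Y : Type*} {f : Y → ℝ}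

theorem pairSumDist_of_ne {a b : Y} (hab : a ≠ b) : pairSumDist f a b = f a + f b :=
  if_neg hab

@[simp]
theorem pairSumDist_self (a : Y) : pairSumDist f a a = 0 :=
  if_pos rfl

theorem isPseudometric_pairSumDist (hf : ∀ a, 0 ≤ f a) : IsPseudometric (pairSumDist f) := by
  have nonneg (a b : Y) : 0 ≤ pairSumDist f a b := by
    unfold pairSumDist
    split_ifs <;> linarith [hf a, hf b]
  refine ⟨nonneg, fun a b => ?_, pairSumDist_self, fun a b c => ?_⟩
  · rcases eq_or_ne a b with rfl | hab
    · rfl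
    · rw [pairSumDist_of_ne hab, pairSumDist_of_ne hab.symm, add_comm]
  rcases eq_or_ne a b with rfl | hab
  · simp
  rcases eq_or_ne b c with rfl | hbc
  · simp
  rcases eq_or_ne a c with rfl | hac
  · rw [pairSumDist_self]
    linarith [nonneg a b, nonneg b a]
  rw [pairSumDist_of_ne hab, pairSumDist_of_ne hbc, pairSumDist_of_ne hac]
  linarith [hf b]

theorem pairSumDist_mem_Md {d : Y → Y → ℝ} (hdiag : ∀ a, d a a = 0) (hf0 : ∀ a, 0 ≤ f a)
    (hf : f ∈ Pd d) : pairSumDist f ∈ Md d := by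
  refine ⟨isPseudometric_pairSumDist hf0, fun a b => ?_⟩
  rcases eq_or_ne a b with rfl | hab
  · simp [hdiag]
  · exact (pairSumDist_of_ne hab).symm ▸ hf a b

end PairSumDist

theorem exists_nonneg_mem_Pd_eq_half {Y : Type*} {d σ : Y → Y → ℝ} (hd : IsDistance d)
    (hσ : σ ∈ Md d) (x y : Y) :
    ∃ f : Y → ℝ, (∀ a, 0 ≤ f a) ∧ f ∈ Pd d ∧ f x = d x y / 2 ∧ f y = d x y / 2 := by
  classical
  obtain ⟨d0, dsymm, ddiag⟩ := hd
  obtain ⟨⟨σ0, σsymm, -, σtri⟩, σge⟩ := hσ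
  let f : Y → ℝ := fun a => if a = x ∨ a = y then d x y / 2 else σ a x + σ a y
  have hf_in {a : Y} (ha : a = x ∨ a = y) : f a = d x y / 2 := if_pos ha
  have hf_out {a : Y} (ha : ¬(a = x ∨ a = y)) : f a = σ a x + σ a y := if_neg ha
  have hw := d0 x y
  have mixed {a b : Y} (ha : a = x ∨ a = y) (hb : ¬(b = x ∨ b = y)) :
      d a b ≤ f a + f b := by
    rw [hf_in ha, hf_out hb]
    rcases ha with rfl | rfl
    · linarith [σge a b, σsymm a b, σ0 b y]
    · linarith [σge a b, σsymm a b, σ0 b x]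
  refine ⟨f, fun a => ?_, fun a b => ?_, hf_in (.inl rfl), hf_in (.inr rfl)⟩
  · by_cases ha : a = x ∨ a = y
    · rw [hf_in ha]; linarith
    · rw [hf_out ha]; linarith [σ0 a x, σ0 a y]
  by_cases ha : a = x ∨ a = y <;> by_cases hb : b = x ∨ b = y
  · rw [hf_in ha, hf_in hb]
    rcases ha with ha | ha <;> rcases hb with hb | hb <;> rw [ha, hb] <;>
      linarith [ddiag x, ddiag y, dsymm x y]
  · exact mixed ha hb
  · rw [dsymm, add_comm]; exact mixed hb ha
  · rw [hf_out ha, hf_out hb]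
    linarith [σge a b, σtri a x b, σsymm x b, σ0 a y, σ0 b y]

theorem statement4_general {X : Type*} (d : X → X → ℝ)
    (hd : IsDistance d) (hM : (Md d).Nonempty) :
    ∀ x y : X, ∃ ρ ∈ Md d, ρ x y = d x y := by
  intro x y
  obtain ⟨σ, hσ⟩ := hM
  obtain ⟨f, hf0, hfP, hfx, hfy⟩ := exists_nonneg_mem_Pd_eq_half hd hσ x y
  refine ⟨pairSumDist f, pairSumDist_mem_Md hd.2.2 hf0 hfP, ?_⟩
  rcases eq_or_ne x y with rfl | hxy
  · simp [hd.2.2]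
  · rw [pairSumDist_of_ne hxy, hfx, hfy]
    ring

/-- If `M(d)` is nonempty then for all `x, y` there is `ρ ∈ M(d)` with
`ρ x y = d x y`. -/
theorem statement4 {X : Type*} [Nonempty X] (d : X → X → ℝ)
    (hd : IsDistance d) (hM : (Md d).Nonempty) :
    ∀ x y : X, ∃ ρ ∈ Md d, ρ x y = d x y :=
  statement4_general d hd hM
end

section
/- Let (X,d) be a distance space with M(d) non-empty. Then for all x,y ∈ X and all f ∈ T_d: (i) f(x) = inf{d∞(f,g) : g ∈ κ(x)}, and (ii) d(x,y) = inf{d∞(f,g) : f ∈ κ(x), g ∈ κ(y)}. -/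
/-!
Elements of `P_d` may be lowered at a single point as long as they stay in `P_d`, and by Zorn's
lemma every element of `P_d` dominates an element of `T_d`.

For (i), lowering `f + f(x)` to `0` at `x` and passing to an element of `T_d` below it gives
`g ∈ κ(x)` with `g ≤ f + f(x)`; minimality of `f` then forces `f ≤ g + f(x)`, so
`d∞(f,g) ≤ f(x)`, while `g(x) = 0` gives `f(x) ≤ d∞(f,g)` for every `g ∈ κ(x)`.

For (ii), a pseudometric `ρ ≥ d` makes `z ↦ ρ(x,z) + ρ(x,y) - d(x,y)`, changed to `0` at `x` and to
`d(x,y)` at `y`, an element of `P_d`. An element `f ∈ κ(x)` below it has `f(y) = d(x,y)`, and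
(ii) follows from (i) applied to `f` at `y`.
-/

open scoped ENNReal

section DInfty

variable {X : Type*}

lemma edist_le_dInfty (f g : X → ℝ) (z : X) : edist (f z) (g z) ≤ dInfty f g :=
  le_iSup (fun z => edist (f z) (g z)) z

lemma dInfty_le_ofReal {f g : X → ℝ} {c : ℝ} (h : ∀ z, |f z - g z| ≤ c) :
    dInfty f g ≤ ENNReal.ofReal c :=
  iSup_le fun z => by
    rw [edist_dist, Real.dist_eq]
    exact ENNReal.ofReal_le_ofReal (h z)

lemma ofReal_le_dInfty_of_apply_eq_zero (f : X → ℝ) {g : X → ℝ} {x : X} (hg : g x = 0) :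
    ENNReal.ofReal (f x) ≤ dInfty f g := by
  refine le_trans ?_ (edist_le_dInfty f g x)
  rw [edist_dist, Real.dist_eq, hg, sub_zero]
  exact ENNReal.ofReal_le_ofReal (le_abs_self _)

end DInfty

lemma le_apply_of_mem_kappa {X : Type*} {d : X → X → ℝ} {f : X → ℝ} {x : X}
    (hf : f ∈ kappa d x) (z : X) : d x z ≤ f z := by
  simpa [hf.2] using hf.1.1 x z

namespace IsDistance

variable {X : Type*} {d : X → X → ℝ}

lemma nonneg_of_mem_pd (hd : IsDistance d) {f : X → ℝ} (hf : f ∈ Pd d) (x : X) : 0 ≤ f x := by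
  linarith [hf x x, hd.2.2 x]

lemma update_mem_pd [DecidableEq X] (hd : IsDistance d) {g : X → ℝ} {y : X} {b : ℝ}
    (hg : g ∈ Pd d) (hb : 0 ≤ b) (hy : ∀ z ≠ y, d y z ≤ b + g z) :
    Function.update g y b ∈ Pd d := by
  intro z w
  simp only [Function.update_apply]
  split_ifs with hz hw hw
  · rw [hz, hw, hd.2.2]
    linarith
  · rw [hz]
    exact hy w hw
  · rw [hw, hd.2.1]
    linarith [hy z hz]
  · exact hg z w

lemma exists_mem_pd_forall_le_of_isChain (hd : IsDistance d) {c : Set (X → ℝ)}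
    (hc : c ⊆ Pd d) (hchain : IsChain (· ≤ ·) c) (hne : c.Nonempty) :
    ∃ m ∈ Pd d, ∀ g ∈ c, m ≤ g := by
  have : Nonempty c := hne.to_subtype
  have hbdd (z : X) : BddBelow (Set.range fun g : c => (g : X → ℝ) z) :=
    ⟨0, by rintro _ ⟨g, rfl⟩; exact hd.nonneg_of_mem_pd (hc g.2) z⟩
  have hpair (z w : X) (g₁ g₂ : c) : d z w ≤ (g₁ : X → ℝ) z + (g₂ : X → ℝ) w := by
    rcases hchain.total g₁.2 g₂.2 with h | h
    · linarith [hc g₁.2 z w, h w]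
    · linarith [hc g₂.2 z w, h z]
  refine ⟨fun z => ⨅ g : c, (g : X → ℝ) z, fun z w => ?_,
    fun g hg z => ciInf_le (hbdd z) ⟨g, hg⟩⟩
  have hw : ∀ g₂ : c, d z w - ⨅ g : c, (g : X → ℝ) z ≤ (g₂ : X → ℝ) w := fun g₂ => by
    have : d z w - (g₂ : X → ℝ) w ≤ ⨅ g : c, (g : X → ℝ) z :=
      le_ciInf fun g₁ => by linarith [hpair z w g₁ g₂]
    linarith
  linarith [le_ciInf hw]

lemma exists_mem_td_le (hd : IsDistance d) {h : X → ℝ} (hh : h ∈ Pd d) :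
    ∃ f ∈ Td d, f ≤ h := by
  obtain ⟨f, hfh, hmin⟩ := zorn_le_nonempty₀ (α := (X → ℝ)ᵒᵈ) (Pd d)
    (fun c hc hchain g hg => hd.exists_mem_pd_forall_le_of_isChain hc hchain.symm ⟨g, hg⟩) h hh
  exact ⟨f, ⟨hmin.prop, fun g hg hgf => le_antisymm hgf (hmin.2 hg hgf)⟩, hfh⟩

lemma exists_mem_kappa_le (hd : IsDistance d) {h : X → ℝ} (hh : h ∈ Pd d) {x : X}
    (hx : h x = 0) : ∃ f ∈ kappa d x, f ≤ h := by
  obtain ⟨f, hf, hfh⟩ := hd.exists_mem_td_le hh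
  exact ⟨f, ⟨hf, le_antisymm (hx ▸ hfh x) (hd.nonneg_of_mem_pd hf.1 x)⟩, hfh⟩

lemma apply_le_of_mem_td (hd : IsDistance d) {f : X → ℝ} (hf : f ∈ Td d) {y : X} {b : ℝ}
    (hb : 0 ≤ b) (hy : ∀ z ≠ y, d y z ≤ b + f z) : f y ≤ b := by
  classical
  by_contra! hlt
  have heq := hf.2 _ (hd.update_mem_pd hf.1 hb hy) (update_le_self_iff.2 hlt.le)
  have := congrFun heq y
  rw [Function.update_self] at this
  linarith

lemma exists_mem_kappa_dInfty_le (hd : IsDistance d) {f : X → ℝ} (hf : f ∈ Td d) (x : X) :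
    ∃ g ∈ kappa d x, dInfty f g ≤ ENNReal.ofReal (f x) := by
  classical
  have hfx := hd.nonneg_of_mem_pd hf.1 x
  have hshift : (fun z => f z + f x) ∈ Pd d := fun z w => by linarith [hf.1 z w]
  obtain ⟨g, hg, hgh⟩ := hd.exists_mem_kappa_le
    (hd.update_mem_pd hshift le_rfl fun z _ => by linarith [hf.1 x z]) (Function.update_self ..)
  have hgf (z : X) : g z ≤ f z + f x :=
    (hgh z).trans (update_le_self_iff.2 (by linarith) z)
  have hfg (z : X) : f z ≤ g z + f x :=
    hd.apply_le_of_mem_td hf (by linarith [hd.nonneg_of_mem_pd hg.1.1 z])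
      fun w _ => by linarith [hg.1.1 z w, hgf w]
  exact ⟨g, hg, dInfty_le_ofReal fun z =>
    abs_sub_le_iff.2 ⟨by linarith [hfg z], by linarith [hgf z]⟩⟩

lemma ofReal_apply_eq_iInf_dInfty (hd : IsDistance d) {f : X → ℝ} (hf : f ∈ Td d) (x : X) :
    ENNReal.ofReal (f x) = ⨅ g ∈ kappa d x, dInfty f g := by
  refine le_antisymm (le_iInf₂ fun g hg => ofReal_le_dInfty_of_apply_eq_zero f hg.2) ?_
  obtain ⟨g, hg, hle⟩ := hd.exists_mem_kappa_dInfty_le hf x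
  exact iInf₂_le_of_le g hg hle

lemma exists_mem_kappa_apply_le (hd : IsDistance d) {ρ : X → X → ℝ} (hρ : ρ ∈ Md d)
    (x y : X) : ∃ f ∈ kappa d x, f y ≤ d x y := by
  classical
  obtain ⟨⟨-, hρsymm, -, hρtri⟩, hdρ⟩ := hρ
  have hc : 0 ≤ ρ x y - d x y := by linarith [hdρ x y]
  set h₀ : X → ℝ := fun z => ρ x z + (ρ x y - d x y)
  have h₀_mem : h₀ ∈ Pd d := fun z w => by
    linarith [hdρ z w, hρtri z x w, hρsymm z x]
  set h₁ := Function.update h₀ x 0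
  have h₁_mem : h₁ ∈ Pd d :=
    hd.update_mem_pd h₀_mem le_rfl fun z _ => by linarith [hdρ x z]
  have h₂_mem : Function.update h₁ y (d x y) ∈ Pd d := by
    refine hd.update_mem_pd h₁_mem (hd.1 x y) fun z _ => ?_
    rcases eq_or_ne z x with rfl | hzx
    · simp [h₁, hd.2.1 y z]
    · simp only [h₁, h₀, Function.update_of_ne hzx]
      linarith [hdρ y z, hρtri y x z, hρsymm y x]
  have h₂x : Function.update h₁ y (d x y) x = 0 := by
    rcases eq_or_ne x y with rfl | hxy
    · simp [hd.2.2]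
    · simp [h₁, Function.update_of_ne hxy]
  obtain ⟨f, hf, hfh⟩ := hd.exists_mem_kappa_le h₂_mem h₂x
  exact ⟨f, hf, by simpa using hfh y⟩

lemma ofReal_eq_iInf_iInf_dInfty (hd : IsDistance d) (hM : (Md d).Nonempty) (x y : X) :
    ENNReal.ofReal (d x y) = ⨅ f ∈ kappa d x, ⨅ g ∈ kappa d y, dInfty f g := by
  refine le_antisymm (le_iInf₂ fun f hf => le_iInf₂ fun g hg => ?_) ?_
  · exact (ENNReal.ofReal_le_ofReal (le_apply_of_mem_kappa hf y)).trans
      (ofReal_le_dInfty_of_apply_eq_zero f hg.2)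
  · obtain ⟨ρ, hρ⟩ := hM
    obtain ⟨f, hf, hfy⟩ := hd.exists_mem_kappa_apply_le hρ x y
    refine iInf₂_le_of_le f hf ?_
    rw [← hd.ofReal_apply_eq_iInf_dInfty hf.1 y]
    exact ENNReal.ofReal_le_ofReal hfy

end IsDistance

theorem statement5_general {X : Type*} (d : X → X → ℝ)
    (hd : IsDistance d) (hM : (Md d).Nonempty) :
    (∀ x : X, ∀ f ∈ Td d,
      ENNReal.ofReal (f x) = ⨅ g ∈ kappa d x, dInfty f g) ∧
    ∀ x y : X,
      ENNReal.ofReal (d x y) =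
        ⨅ f ∈ kappa d x, ⨅ g ∈ kappa d y, dInfty f g :=
  ⟨fun x _ hf => hd.ofReal_apply_eq_iInf_dInfty hf x, hd.ofReal_eq_iInf_iInf_dInfty hM⟩

/-- If `M(d)` is nonempty then for all `x, y ∈ X` and `f ∈ T_d`:
(i) `f x = inf {d∞(f,g) : g ∈ κ(x)}`, and
(ii) `d x y = inf {d∞(f,g) : f ∈ κ(x), g ∈ κ(y)}`. -/
theorem statement5 {X : Type*} [Nonempty X] (d : X → X → ℝ)
    (hd : IsDistance d) (hM : (Md d).Nonempty) :
    (∀ x : X, ∀ f ∈ Td d,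
      ENNReal.ofReal (f x) = ⨅ g ∈ kappa d x, dInfty f g) ∧
    ∀ x y : X,
      ENNReal.ofReal (d x y) =
        ⨅ f ∈ kappa d x, ⨅ g ∈ kappa d y, dInfty f g :=
  statement5_general d hd hM
end

section
/- Let (X,d) be a distance space such that (T_d,d∞) is a metric space (T_d is non-empty and d∞(f,g) < ∞ for all f,g ∈ T_d). Then there exists a map φ : P_d → T_d such that for all f,g ∈ P_d, φ(f) ⪯ f and d∞(φ(f),φ(g)) ≤ d∞(f,g). -/
open scoped ENNReal

/-!
Among the maps `ψ : P_d → P_d` with `ψ f ⪯ f` that do not increase `d∞`, Zorn's lemma yields a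
pointwise minimal one: the pointwise infimum of a chain of such maps is again one, since the values
of a chain at a fixed `f` form a directed family in `P_d`, and all of them lie above `x ↦ d(x,x)/2`.
A minimal `ψ` takes values in `T_d`: if `g ∈ P_d` and `g ⪯ ψ f₀`, then
`f ↦ min (ψ f) (g + d∞(f, f₀))` is again such a map, lies below `ψ`, and equals `g` at `f₀`,
so minimality forces `ψ f₀ = g`.
-/

section TightSpan

variable {X : Type*}

section dInfty

variable {f g h : X → ℝ}

theorem dInfty_self (f : X → ℝ) : dInfty f f = 0 := by
  simp [dInfty]

theorem dInfty_comm (f g : X → ℝ) : dInfty f g = dInfty g f := by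
  simp [dInfty, edist_comm]

theorem dInfty_triangle (f g h : X → ℝ) : dInfty f h ≤ dInfty f g + dInfty g h :=
  iSup_le fun x => (edist_triangle _ (g x) _).trans <|
    add_le_add (le_iSup (fun y => edist (f y) (g y)) x) (le_iSup (fun y => edist (g y) (h y)) x)

theorem dInfty_le_ofReal_iff {r : ℝ} (hr : 0 ≤ r) :
    dInfty f g ≤ ENNReal.ofReal r ↔ ∀ x, |f x - g x| ≤ r := by
  simp only [dInfty, iSup_le_iff, edist_le_ofReal hr, Real.dist_eq]

theorem dInfty_le_iff_of_ne_top {c : ℝ≥0∞} (hc : c ≠ ⊤) :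
    dInfty f g ≤ c ↔ ∀ x, |f x - g x| ≤ c.toReal := by
  rw [← dInfty_le_ofReal_iff ENNReal.toReal_nonneg, ENNReal.ofReal_toReal hc]

theorem dInfty_eq_top_iff_of_ne_top (hfg : dInfty f g ≠ ⊤) :
    dInfty f h = ⊤ ↔ dInfty g h = ⊤ := by
  constructor <;> intro htop <;> by_contra hne
  · exact ENNReal.add_ne_top.2 ⟨hfg, hne⟩ (top_le_iff.1 (htop ▸ dInfty_triangle f g h))
  · rw [dInfty_comm] at hfg
    exact ENNReal.add_ne_top.2 ⟨hfg, hne⟩ (top_le_iff.1 (htop ▸ dInfty_triangle g f h))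

theorem abs_toReal_dInfty_sub_le (hfg : dInfty f g ≠ ⊤) (hfh : dInfty f h ≠ ⊤)
    (hgh : dInfty g h ≠ ⊤) :
    |(dInfty f h).toReal - (dInfty g h).toReal| ≤ (dInfty f g).toReal := by
  have h₁ := ENNReal.toReal_le_add (dInfty_triangle f g h) hfg hgh
  have h₂ := ENNReal.toReal_le_add (dInfty_triangle g f h) (dInfty_comm f g ▸ hfg) hfh
  rw [dInfty_comm g f] at h₂
  exact abs_sub_le_iff.2 ⟨by linarith, by linarith⟩

end dInfty

theorem ciInf_le_ciInf_add {ι : Type*} [Nonempty ι] {u v : ι → ℝ} {r : ℝ}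
    (hu : BddBelow (Set.range u)) (h : ∀ i, u i ≤ v i + r) : ⨅ i, u i ≤ (⨅ i, v i) + r := by
  rw [← sub_le_iff_le_add]
  exact le_ciInf fun i => sub_le_iff_le_add.2 ((ciInf_le hu i).trans (h i))

theorem dInfty_iInf_le {ι : Type*} [Nonempty ι] {u v : ι → X → ℝ} {c : ℝ≥0∞}
    (hu : ∀ x, BddBelow (Set.range fun i => u i x)) (hv : ∀ x, BddBelow (Set.range fun i => v i x))
    (h : ∀ i, dInfty (u i) (v i) ≤ c) :
    dInfty (fun x => ⨅ i, u i x) (fun x => ⨅ i, v i x) ≤ c := by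
  rcases eq_or_ne c ⊤ with rfl | hc
  · exact le_top
  simp only [dInfty_le_iff_of_ne_top hc, abs_sub_le_iff] at h ⊢
  intro x
  exact ⟨sub_le_iff_le_add'.2 (ciInf_le_ciInf_add (v := fun i => v i x) (hu x) fun i => by
      linarith [(h i x).1]),
    sub_le_iff_le_add'.2 (ciInf_le_ciInf_add (v := fun i => u i x) (hv x) fun i => by
      linarith [(h i x).2])⟩

variable {d : X → X → ℝ}

theorem half_le_of_mem_Pd {f : X → ℝ} (hf : f ∈ Pd d) (x : X) : d x x / 2 ≤ f x := by
  linarith [hf x x]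

theorem iInf_mem_Pd {ι : Type*} [Nonempty ι] {u : ι → X → ℝ} (hu : Directed (· ≥ ·) u)
    (hP : ∀ i, u i ∈ Pd d) : (fun x => ⨅ i, u i x) ∈ Pd d := by
  have hbdd : ∀ x, BddBelow (Set.range fun i => u i x) := fun x =>
    ⟨d x x / 2, Set.forall_mem_range.2 fun i => half_le_of_mem_Pd (hP i) x⟩
  intro x y
  have hmixed : ∀ i j, d x y - u i x ≤ u j y := fun i j => by
    obtain ⟨k, hki, hkj⟩ := hu i j
    linarith [hP k x y, hki x, hkj y]
  have hx : d x y - ⨅ j, u j y ≤ ⨅ i, u i x :=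
    le_ciInf fun i => sub_le_comm.1 (le_ciInf fun j => hmixed i j)
  linarith

structure IsNonexpansiveDeflation (d : X → X → ℝ) (ψ : Pd d → X → ℝ) : Prop where
  mem_Pd : ∀ f, ψ f ∈ Pd d
  le_self : ∀ f, ψ f ≤ f
  dInfty_le : ∀ f g, dInfty (ψ f) (ψ g) ≤ dInfty (f : X → ℝ) g

theorem isNonexpansiveDeflation_val : IsNonexpansiveDeflation d Subtype.val :=
  ⟨Subtype.prop, fun _ => le_rfl, fun _ _ => le_rfl⟩

section Chain

variable {c : Set (Pd d → X → ℝ)}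

theorem bddBelow_range_apply_of_isNonexpansiveDeflation
    (hS : ∀ ψ ∈ c, IsNonexpansiveDeflation d ψ) (f : Pd d) (x : X) :
    BddBelow (Set.range fun ψ : c => (ψ : Pd d → X → ℝ) f x) :=
  ⟨d x x / 2, Set.forall_mem_range.2 fun ψ => half_le_of_mem_Pd ((hS ψ ψ.2).mem_Pd f) x⟩

theorem iInf_apply_le_of_isNonexpansiveDeflation
    (hS : ∀ ψ ∈ c, IsNonexpansiveDeflation d ψ) {ψ} (hψ : ψ ∈ c) :
    (fun f x => ⨅ χ : c, (χ : Pd d → X → ℝ) f x) ≤ ψ := fun f x =>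
  ciInf_le (bddBelow_range_apply_of_isNonexpansiveDeflation hS f x) ⟨ψ, hψ⟩

theorem IsNonexpansiveDeflation.iInf (hS : ∀ ψ ∈ c, IsNonexpansiveDeflation d ψ)
    (hne : c.Nonempty) (hc : IsChain (· ≤ ·) c) :
    IsNonexpansiveDeflation d fun f x => ⨅ ψ : c, (ψ : Pd d → X → ℝ) f x := by
  have := hne.to_subtype
  obtain ⟨ψ₀, hψ₀⟩ := hne
  have hbdd := bddBelow_range_apply_of_isNonexpansiveDeflation hS
  refine ⟨fun f => iInf_mem_Pd ?_ fun ψ => (hS ψ ψ.2).mem_Pd f,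
    fun f => (iInf_apply_le_of_isNonexpansiveDeflation hS hψ₀ f).trans ((hS ψ₀ hψ₀).le_self f),
    fun f g => dInfty_iInf_le (hbdd f) (hbdd g) fun ψ => (hS ψ ψ.2).dInfty_le f g⟩
  intro ψ χ
  rcases hc.total ψ.2 χ.2 with h | h
  · exact ⟨ψ, le_rfl, h f⟩
  · exact ⟨χ, h f, le_rfl⟩

end Chain

theorem exists_minimal_isNonexpansiveDeflation :
    ∃ ψ, Minimal (IsNonexpansiveDeflation d) ψ := by
  obtain ⟨ψ, -, hψ⟩ := zorn_le_nonempty₀ (α := (Pd d → X → ℝ)ᵒᵈ)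
    {ψ | IsNonexpansiveDeflation d (OrderDual.ofDual ψ)}
    (fun c hcS hc ψ hψ => ⟨_, IsNonexpansiveDeflation.iInf (c := c) hcS ⟨ψ, hψ⟩ hc.symm,
      fun _ hχ => iInf_apply_le_of_isNonexpansiveDeflation (c := c) hcS hχ⟩)
    (OrderDual.toDual Subtype.val) isNonexpansiveDeflation_val
  exact ⟨_, minimal_toDual.2 hψ⟩

section Lower

variable {ψ : Pd d → X → ℝ} {f₀ : Pd d} {g : X → ℝ}

/-- Since `(⊤ : ℝ≥0∞).toReal = 0`, the uncapped case `d∞(f, f₀) = ∞` has to be split off. -/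
noncomputable def lowerTo (ψ : Pd d → X → ℝ) (f₀ : Pd d) (g : X → ℝ) : Pd d → X → ℝ :=
  fun f x => if dInfty (f : X → ℝ) f₀ = ⊤ then ψ f x
    else min (ψ f x) (g x + (dInfty (f : X → ℝ) f₀).toReal)

theorem lowerTo_le : lowerTo ψ f₀ g ≤ ψ := fun f x => by
  unfold lowerTo
  split_ifs
  exacts [le_rfl, min_le_left _ _]

theorem lowerTo_apply_self (x : X) : lowerTo ψ f₀ g f₀ x = min (ψ f₀ x) (g x) := by
  simp [lowerTo, dInfty_self]

theorem IsNonexpansiveDeflation.lowerTo (hψ : IsNonexpansiveDeflation d ψ) (hg : g ∈ Pd d)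
    (hgle : g ≤ ψ f₀) : IsNonexpansiveDeflation d (lowerTo ψ f₀ g) where
  mem_Pd f := by
    unfold _root_.lowerTo
    split_ifs with hf
    · exact hψ.mem_Pd f
    set δ := (dInfty (f : X → ℝ) f₀).toReal
    have hδ : 0 ≤ δ := ENNReal.toReal_nonneg
    have hclose : ∀ x, ψ f₀ x ≤ ψ f x + δ := fun x => by
      linarith [(abs_sub_le_iff.1 ((dInfty_le_iff_of_ne_top hf).1 (hψ.dInfty_le f f₀) x)).2]
    intro x y
    beta_reduce
    rcases min_choice (ψ f x) (g x + δ) with h₁ | h₁ <;>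
      rcases min_choice (ψ f y) (g y + δ) with h₂ | h₂ <;> rw [h₁, h₂] <;>
      linarith [hψ.mem_Pd f x y, hg x y, hclose x, hclose y, hgle x, hgle y]
  le_self f := (lowerTo_le f).trans (hψ.le_self f)
  dInfty_le f h := by
    rcases eq_or_ne (dInfty (f : X → ℝ) h) ⊤ with hfh | hfh
    · rw [hfh]; exact le_top
    have htop := dInfty_eq_top_iff_of_ne_top (h := (f₀ : X → ℝ)) hfh
    unfold _root_.lowerTo
    by_cases hf : dInfty (f : X → ℝ) f₀ = ⊤
    · simp only [hf, htop.1 hf, if_true]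
      exact hψ.dInfty_le f h
    have hh : dInfty (h : X → ℝ) f₀ ≠ ⊤ := mt htop.2 hf
    simp only [hf, hh, if_false]
    rw [dInfty_le_iff_of_ne_top hfh]
    intro x
    refine (abs_min_sub_min_le_max _ _ _ _).trans (max_le ?_ ?_)
    · exact (dInfty_le_iff_of_ne_top hfh).1 (hψ.dInfty_le f h) x
    · rw [add_sub_add_left_eq_sub]
      exact abs_toReal_dInfty_sub_le hfh hf hh

theorem mem_Td_of_minimal (hψ : Minimal (IsNonexpansiveDeflation d) ψ) (f : Pd d) :
    ψ f ∈ Td d := by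
  refine ⟨hψ.prop.mem_Pd f, fun g hg hgle => le_antisymm hgle fun x => ?_⟩
  have hlow := hψ.le_of_le (hψ.prop.lowerTo hg hgle) lowerTo_le
  calc ψ f x ≤ lowerTo ψ f g f x := hlow f x
    _ = min (ψ f x) (g x) := lowerTo_apply_self x
    _ ≤ g x := min_le_right _ _

end Lower

end TightSpan

theorem statement9_general {X : Type*} (d : X → X → ℝ) :
    ∃ φ : (X → ℝ) → (X → ℝ),
      (∀ f ∈ Pd d, φ f ∈ Td d ∧ φ f ≤ f) ∧
      ∀ f ∈ Pd d, ∀ g ∈ Pd d, dInfty (φ f) (φ g) ≤ dInfty f g := by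
  classical
  obtain ⟨ψ, hψ⟩ := exists_minimal_isNonexpansiveDeflation (d := d)
  refine ⟨fun f => if hf : f ∈ Pd d then ψ ⟨f, hf⟩ else f, fun f hf => ?_, fun f hf g hg => ?_⟩
  · simp only [dif_pos hf]
    exact ⟨mem_Td_of_minimal hψ _, hψ.prop.le_self _⟩
  · simp only [dif_pos hf, dif_pos hg]
    exact hψ.prop.dInfty_le ⟨f, hf⟩ ⟨g, hg⟩

/-- If `(T_d, d∞)` is a metric space, there is a nonexpansive retraction
`φ : P_d → T_d` with `φ f ⪯ f`. -/
theorem statement9 {X : Type*} [Nonempty X] (d : X → X → ℝ)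
    (hd : IsDistance d) (hne : (Td d).Nonempty)
    (hfin : ∀ f ∈ Td d, ∀ g ∈ Td d, dInfty f g ≠ ⊤) :
    ∃ φ : (X → ℝ) → (X → ℝ),
      (∀ f ∈ Pd d, φ f ∈ Td d ∧ φ f ≤ f) ∧
      ∀ f ∈ Pd d, ∀ g ∈ Pd d, dInfty (φ f) (φ g) ≤ dInfty f g :=
  statement9_general d
end

section
/- A distance space (X,d) is dominated by a pseudometric (i.e., M(d) is non-empty) if and only if there exists a countable chain X₁ ⊆ X₂ ⊆ ⋯ of subsets of X with ⋃_{n=1}^∞ X_n = X such that each X_n is bounded, i.e., sup{d(x,y) : x,y ∈ X_n} < ∞. -/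
open scoped ENNReal

/-!
A pseudometric `ρ ≥ d` is bounded, hence so is `d`, on the balls `{x | ρ x₀ x ≤ n}`, which
exhaust `X`. Conversely, give each point `x` a height `h x` with `x ∈ X_{h x}` and let `r` be a
monotone nonnegative majorant of the bounds of `d` on the `X_n`; then
`ρ x y = r (max (h x) (h y))` for `x ≠ y` is an ultrametric, and it dominates `d` because
`x` and `y` both lie in `X_{max (h x) (h y)}`.
-/

section

variable {X : Type*}

theorem IsPseudometric.dist_le_add_of_le {ρ : X → X → ℝ} (hρ : IsPseudometric ρ) {x₀ x y : X}
    {r s : ℝ} (hx : ρ x₀ x ≤ r) (hy : ρ x₀ y ≤ s) : ρ x y ≤ r + s := by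
  obtain ⟨-, hsymm, -, htri⟩ := hρ
  linarith [htri x x₀ y, hsymm x x₀]

theorem exists_bounded_chain_of_mem_Md {d ρ : X → X → ℝ} (hρ : ρ ∈ Md d) (x₀ : X) :
    ∃ Xn : ℕ → Set X, (∀ n, Xn n ⊆ Xn (n + 1)) ∧
      (⋃ n, Xn n) = Set.univ ∧
      ∀ n, ∃ C : ℝ, ∀ x ∈ Xn n, ∀ y ∈ Xn n, d x y ≤ C := by
  obtain ⟨hρ, hdom⟩ := hρ
  refine ⟨fun n => {x | ρ x₀ x ≤ n}, fun n x (hx : ρ x₀ x ≤ n) => hx.trans (by norm_num), ?_,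
    fun n => ⟨n + n, ?_⟩⟩
  · exact Set.iUnion_eq_univ_iff.2 fun x => exists_nat_ge (ρ x₀ x)
  · exact fun x hx y hy => (hdom x y).trans (hρ.dist_le_add_of_le hx hy)

def heightUltrametric [DecidableEq X] (h : X → ℕ) (r : ℕ → ℝ) (x y : X) : ℝ :=
  if x = y then 0 else r (max (h x) (h y))

section heightUltrametric

variable [DecidableEq X] {h : X → ℕ} {r : ℕ → ℝ}

theorem heightUltrametric_nonneg (hr : 0 ≤ r) (x y : X) : 0 ≤ heightUltrametric h r x y := by
  unfold heightUltrametric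
  split_ifs
  exacts [le_rfl, hr _]

theorem heightUltrametric_le_max (hr : Monotone r) (hr0 : 0 ≤ r) (x y z : X) :
    heightUltrametric h r x z ≤ max (heightUltrametric h r x y) (heightUltrametric h r y z) := by
  by_cases hxy : x = y
  · subst hxy
    exact le_max_right _ _
  by_cases hyz : y = z
  · subst hyz
    exact le_max_left _ _
  by_cases hxz : x = z
  · simp only [heightUltrametric, if_pos hxz]
    exact le_max_of_le_left (heightUltrametric_nonneg hr0 x y)
  simp only [heightUltrametric, if_neg hxy, if_neg hyz, if_neg hxz, ← hr.map_max]
  exact hr (by omega)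

theorem isPseudometric_heightUltrametric (hr : Monotone r) (hr0 : 0 ≤ r) :
    IsPseudometric (heightUltrametric h r) := by
  refine ⟨heightUltrametric_nonneg hr0, fun x y => ?_, fun x => if_pos rfl, fun x y z => ?_⟩
  · unfold heightUltrametric
    simp only [eq_comm, max_comm]
  · exact (heightUltrametric_le_max hr hr0 x y z).trans
      (max_le_add_of_nonneg (heightUltrametric_nonneg hr0 x y) (heightUltrametric_nonneg hr0 y z))

end heightUltrametric

theorem exists_monotone_nonneg_ge (C : ℕ → ℝ) : ∃ r : ℕ → ℝ, Monotone r ∧ 0 ≤ r ∧ C ≤ r :=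
  ⟨partialSups fun n => |C n|, (partialSups _).monotone,
    fun n => (abs_nonneg _).trans (le_partialSups (fun n => |C n|) n),
    fun n => (le_abs_self _).trans (le_partialSups (fun n => |C n|) n)⟩

theorem Md_nonempty_of_bounded_chain {d : X → X → ℝ} (hd : ∀ x, d x x = 0) {Xn : ℕ → Set X}
    (hmono : Monotone Xn) (hcover : (⋃ n, Xn n) = Set.univ)
    (hbdd : ∀ n, ∃ C : ℝ, ∀ x ∈ Xn n, ∀ y ∈ Xn n, d x y ≤ C) : (Md d).Nonempty := by
  classical
  choose C hC using hbdd
  obtain ⟨r, hr, hr0, hCr⟩ := exists_monotone_nonneg_ge C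
  choose h hh using Set.iUnion_eq_univ_iff.1 hcover
  refine ⟨heightUltrametric h r, isPseudometric_heightUltrametric hr hr0, fun x y => ?_⟩
  by_cases hxy : x = y
  · simp [heightUltrametric, hxy, hd]
  rw [heightUltrametric, if_neg hxy]
  exact (hC _ x (hmono (le_max_left _ _) (hh x)) y (hmono (le_max_right _ _) (hh y))).trans
    (hCr _)

end

/-- `M(d)` is nonempty iff `X` is covered by a countable increasing chain of
`d`-bounded subsets. -/
theorem statement12 {X : Type*} [Nonempty X] (d : X → X → ℝ)
    (hd : IsDistance d) :
    (Md d).Nonempty ↔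
      ∃ Xn : ℕ → Set X, (∀ n, Xn n ⊆ Xn (n + 1)) ∧
        (⋃ n, Xn n) = Set.univ ∧
        ∀ n, ∃ C : ℝ, ∀ x ∈ Xn n, ∀ y ∈ Xn n, d x y ≤ C := by
  constructor
  · rintro ⟨ρ, hρ⟩
    exact exists_bounded_chain_of_mem_Md hρ (Classical.arbitrary X)
  · rintro ⟨Xn, hchain, hcover, hbdd⟩
    exact Md_nonempty_of_bounded_chain hd.2.2 (monotone_nat_of_le_succ hchain) hcover hbdd
end

section
/- Let (X,δ) be a diversity and D = D_δ the associated distance on the finite subsets of X. If f ∈ T_δ then f − δ ∈ T_D. Moreover, for all f₁,f₂ ∈ T_δ, d∞(f₁ − δ, f₂ − δ) = d∞(f₁,f₂) < ∞, so T_δ embeds isometrically into T_D via f ↦ f − δ. -/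
/-!
Lowering the value of `f ∈ T_δ` at a single nonempty set `A` to `c` keeps it in `P_δ` as soon as
`δ (A ∪ ⋃ 𝒟) ≤ c + ∑_{C ∈ 𝒟} f C` for every collection `𝒟`; minimality then forces `f A ≤ c`.
This test yields subadditivity `f (⋃ 𝒞) ≤ ∑_{C ∈ 𝒞} f C` and the Lipschitz bound
`f A ≤ δ (A ∪ B) + f B`. If `g ∈ P_D` lies below `f - δ`, then for `U = ⋃ 𝒟`
`δ (A ∪ U) ≤ δ A + δ U + g A + g U ≤ δ A + g A + f U ≤ δ A + g A + ∑_{C ∈ 𝒟} f C`,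
so the test with `c = g A + δ A` shows `g = f - δ`. Subtracting `δ` leaves pointwise differences
unchanged, and the Lipschitz bound through a fixed singleton `B` bounds `|f₁ - f₂|` by
`f₁ B + f₂ B`.
-/

open scoped ENNReal

section DivDefs

variable {X : Type*} [DecidableEq X]

/-- A diversity on `X`: a nonnegative function on finite subsets which
vanishes exactly on sets of at most one element and satisfies the diversity
triangle inequality. -/
def IsDiversity (δ : Finset X → ℝ) : Prop :=
  (∀ A, 0 ≤ δ A) ∧ (∀ A : Finset X, δ A = 0 ↔ A.card ≤ 1) ∧
  ∀ A B C : Finset X, B.Nonempty → δ (A ∪ C) ≤ δ (A ∪ B) + δ (B ∪ C)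

/-- The distance `D_δ` on finite subsets associated to a diversity `δ`. -/
def Ddelta (δ : Finset X → ℝ) (A B : Finset X) : ℝ :=
  max (δ (A ∪ B) - δ A - δ B) 0

/-- `P_δ` for a diversity `δ`. -/
def Pdelta (δ : Finset X → ℝ) : Set (Finset X → ℝ) :=
  {f | f ∅ = 0 ∧ ∀ Cc : Finset (Finset X), Cc.Nonempty →
    (∀ C ∈ Cc, C.Nonempty) → δ (Cc.sup id) ≤ ∑ C ∈ Cc, f C}

/-- The tight span `T_δ` of a diversity `δ`. -/
def Tdelta (δ : Finset X → ℝ) : Set (Finset X → ℝ) :=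
  {f | f ∈ Pdelta δ ∧ ∀ g ∈ Pdelta δ, g ≤ f → g = f}

/-- The relaxation `P_δ^{(2)}` using only pairs of finite sets. -/
def Pdelta2 (δ : Finset X → ℝ) : Set (Finset X → ℝ) :=
  {f | f ∅ = 0 ∧ ∀ A B : Finset X, δ (A ∪ B) ≤ f A + f B}

/-- The minimal elements `T_δ^{(2)}` of `P_δ^{(2)}`. -/
def Tdelta2 (δ : Finset X → ℝ) : Set (Finset X → ℝ) :=
  {f | f ∈ Pdelta2 δ ∧ ∀ g ∈ Pdelta2 δ, g ≤ f → g = f}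

/-- `B_A = {x ∈ X : δ(A ∪ {x}) ≤ δ(A)}`. -/
def Bset (δ : Finset X → ℝ) (A : Finset X) : Set X :=
  {x | δ (A ∪ {x}) ≤ δ A}

/-- A hyperconvex diversity. -/
def DivHyperconvex (δ : Finset X → ℝ) : Prop :=
  ∀ (ι : Type*) (A : ι → Finset X) (r : ι → ℝ), (∀ γ, 0 ≤ r γ) →
    (∀ G : Finset ι, G.Nonempty → δ (G.sup A) ≤ ∑ γ ∈ G, r γ) →
    ∃ z : X, ∀ γ, δ (A γ ∪ {z}) ≤ r γ

end DivDefs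

section TightSpanEmbedding

open Finset

lemma dInfty_sub_sub {Y : Type*} (f g h : Y → ℝ) : dInfty (f - h) (g - h) = dInfty f g := by
  simp only [dInfty, Pi.sub_apply, edist_dist, dist_sub_right]

lemma dInfty_ne_top_of_abs_sub_le {Y : Type*} {f g : Y → ℝ} {M : ℝ}
    (h : ∀ y, |f y - g y| ≤ M) : dInfty f g ≠ ⊤ :=
  ne_top_of_le_ne_top ENNReal.ofReal_ne_top <| iSup_le fun y => by
    rw [edist_dist, Real.dist_eq]
    exact ENNReal.ofReal_le_ofReal (h y)

variable {X : Type*} [DecidableEq X] {δ : Finset X → ℝ} {f : Finset X → ℝ}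

lemma apply_le_of_mem_Tdelta (hf : f ∈ Tdelta δ) {A : Finset X} (hA : A.Nonempty) {c : ℝ}
    (h : ∀ 𝒟 : Finset (Finset X), δ (A ∪ 𝒟.sup id) ≤ c + ∑ C ∈ 𝒟, f C) : f A ≤ c := by
  set g := Function.update f A (min (f A) c)
  have hgf : g ≤ f := by
    intro C
    rcases eq_or_ne C A with rfl | hC
    · simp [g]
    · simp [g, hC]
  have hg : g ∈ Pdelta δ := by
    refine ⟨by simp [g, hA.ne_empty.symm, hf.1.1], fun 𝒞 h𝒞 hN => ?_⟩
    by_cases hA𝒞 : A ∈ 𝒞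
    · have hsup : 𝒞.sup id = A ∪ (𝒞 \ {A}).sup id := by
        conv_lhs => rw [← insert_sdiff_self_of_mem hA𝒞]
        rw [sup_insert]; rfl
      rw [sum_update_of_mem hA𝒞, ← min_add_add_right, le_min_iff,
        ← sum_eq_add_sum_sdiff_singleton_of_mem hA𝒞]
      exact ⟨hf.1.2 𝒞 h𝒞 hN, hsup ▸ h _⟩
    · rw [sum_update_of_notMem hA𝒞]
      exact hf.1.2 𝒞 h𝒞 hN
  have hmin : min (f A) c = f A := by
    simpa [g] using congrFun (hf.2 g hg hgf) A
  exact min_eq_left_iff.mp hmin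

namespace IsDiversity

variable (hδ : IsDiversity δ)
include hδ

lemma apply_empty : δ ∅ = 0 :=
  (hδ.2.1 ∅).mpr (by simp)

lemma sup_le_sum_of_mem_Pdelta (hf : f ∈ Pdelta δ) (𝒞 : Finset (Finset X)) :
    δ (𝒞.sup id) ≤ ∑ C ∈ 𝒞, f C := by
  rw [← sup_erase_bot, ← sum_erase 𝒞 (show f ⊥ = 0 from hf.1)]
  rcases (𝒞.erase ⊥).eq_empty_or_nonempty with h | h
  · rw [h]
    simp [hδ.apply_empty]
  · exact hf.2 _ h fun C hC => nonempty_iff_ne_empty.mpr (ne_of_mem_erase hC)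

lemma le_of_mem_Pdelta (hf : f ∈ Pdelta δ) (A : Finset X) : δ A ≤ f A := by
  simpa using hδ.sup_le_sum_of_mem_Pdelta hf {A}

lemma nonneg_of_mem_Pdelta (hf : f ∈ Pdelta δ) (A : Finset X) : 0 ≤ f A :=
  (hδ.1 A).trans (hδ.le_of_mem_Pdelta hf A)

lemma sup_union_sup_le_of_mem_Pdelta (hf : f ∈ Pdelta δ) (𝒞 𝒟 : Finset (Finset X)) :
    δ (𝒞.sup id ∪ 𝒟.sup id) ≤ ∑ C ∈ 𝒞, f C + ∑ C ∈ 𝒟, f C := by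
  have hunion := sum_union_inter (s₁ := 𝒞) (s₂ := 𝒟) (f := f)
  have hinter := sum_nonneg fun C (_ : C ∈ 𝒞 ∩ 𝒟) => hδ.nonneg_of_mem_Pdelta hf C
  have := hδ.sup_le_sum_of_mem_Pdelta hf (𝒞 ∪ 𝒟)
  rw [sup_union] at this
  exact this.trans (by linarith)

lemma union_le_add_of_mem_Pdelta (hf : f ∈ Pdelta δ) (A B : Finset X) :
    δ (A ∪ B) ≤ f A + f B := by
  simpa using hδ.sup_union_sup_le_of_mem_Pdelta hf {A} {B}

lemma sup_le_sum_of_mem_Tdelta (hf : f ∈ Tdelta δ) (𝒞 : Finset (Finset X)) :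
    f (𝒞.sup id) ≤ ∑ C ∈ 𝒞, f C := by
  rcases (𝒞.sup id).eq_empty_or_nonempty with h | h
  · rw [h, hf.1.1]
    exact sum_nonneg fun C _ => hδ.nonneg_of_mem_Pdelta hf.1 C
  · exact apply_le_of_mem_Tdelta hf h (hδ.sup_union_sup_le_of_mem_Pdelta hf.1 𝒞)

lemma le_union_add_of_mem_Tdelta (hf : f ∈ Tdelta δ) (A : Finset X) {B : Finset X}
    (hB : B.Nonempty) : f A ≤ δ (A ∪ B) + f B := by
  rcases A.eq_empty_or_nonempty with rfl | hA
  · rw [hf.1.1]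
    exact add_nonneg (hδ.1 _) (hδ.nonneg_of_mem_Pdelta hf.1 B)
  refine apply_le_of_mem_Tdelta hf hA fun 𝒟 => ?_
  have htri := hδ.2.2 A B (𝒟.sup id) hB
  have hB𝒟 := hδ.sup_union_sup_le_of_mem_Pdelta hf.1 {B} 𝒟
  simp only [sup_singleton, id, sum_singleton] at hB𝒟
  linarith

lemma abs_sub_le_of_mem_Tdelta {f₁ f₂ : Finset X → ℝ} (hf₁ : f₁ ∈ Tdelta δ)
    (hf₂ : f₂ ∈ Tdelta δ) (A : Finset X) {B : Finset X} (hB : B.Nonempty) :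
    |f₁ A - f₂ A| ≤ f₁ B + f₂ B := by
  have h₁ := hδ.le_union_add_of_mem_Tdelta hf₁ A hB
  have h₂ := hδ.le_union_add_of_mem_Tdelta hf₂ A hB
  have h₁' := hδ.union_le_add_of_mem_Pdelta hf₁.1 A B
  have h₂' := hδ.union_le_add_of_mem_Pdelta hf₂.1 A B
  rw [abs_sub_le_iff]
  constructor <;> linarith

lemma dInfty_ne_top_of_mem_Tdelta {f₁ f₂ : Finset X → ℝ} (hf₁ : f₁ ∈ Tdelta δ)
    (hf₂ : f₂ ∈ Tdelta δ) : dInfty f₁ f₂ ≠ ⊤ := by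
  rcases isEmpty_or_nonempty X with hX | ⟨⟨x⟩⟩
  · refine dInfty_ne_top_of_abs_sub_le (M := 0) fun A => ?_
    simp [eq_empty_of_isEmpty A, hf₁.1.1, hf₂.1.1]
  · exact dInfty_ne_top_of_abs_sub_le fun A =>
      hδ.abs_sub_le_of_mem_Tdelta hf₁ hf₂ A (singleton_nonempty x)

lemma sub_mem_Pd_Ddelta (hf : f ∈ Pdelta δ) : f - δ ∈ Pd (Ddelta δ) := fun A B => by
  have hAB := hδ.union_le_add_of_mem_Pdelta hf A B
  have hA := hδ.le_of_mem_Pdelta hf A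
  have hB := hδ.le_of_mem_Pdelta hf B
  simp only [Ddelta, Pi.sub_apply, max_le_iff]
  constructor <;> linarith [hδ.1 (A ∪ B)]

lemma sub_mem_Td_Ddelta (hf : f ∈ Tdelta δ) : f - δ ∈ Td (Ddelta δ) := by
  refine ⟨hδ.sub_mem_Pd_Ddelta hf.1, fun g hg hgf => le_antisymm hgf fun A => ?_⟩
  have hg_nonneg : 0 ≤ g A := by
    have := (le_max_right _ _).trans (hg A A)
    linarith
  rcases A.eq_empty_or_nonempty with rfl | hA
  · simpa [hf.1.1, hδ.apply_empty] using hg_nonneg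
  suffices f A ≤ g A + δ A by simp only [Pi.sub_apply]; linarith
  refine apply_le_of_mem_Tdelta hf hA fun 𝒟 => ?_
  set U := 𝒟.sup id
  have hD : δ (A ∪ U) - δ A - δ U ≤ g A + g U := (le_max_left _ _).trans (hg A U)
  have hgU : g U ≤ f U - δ U := hgf U
  have hfU := hδ.sup_le_sum_of_mem_Tdelta hf 𝒟
  linarith

end IsDiversity

end TightSpanEmbedding

/-- If `f ∈ T_δ` then `f - δ ∈ T_{D_δ}`, and `f ↦ f - δ` is an isometric
embedding of `(T_δ, d∞)` into `(T_{D_δ}, d∞)`, with all distances finite. -/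
theorem statement16 {X : Type*} [DecidableEq X] (δ : Finset X → ℝ)
    (hδ : IsDiversity δ) :
    (∀ f ∈ Tdelta δ, f - δ ∈ Td (Ddelta δ)) ∧
    ∀ f₁ ∈ Tdelta δ, ∀ f₂ ∈ Tdelta δ,
      dInfty (f₁ - δ) (f₂ - δ) = dInfty f₁ f₂ ∧ dInfty f₁ f₂ ≠ ⊤ :=
  ⟨fun _ hf => hδ.sub_mem_Td_Ddelta hf, fun f₁ hf₁ f₂ hf₂ =>
    ⟨dInfty_sub_sub f₁ f₂ δ, hδ.dInfty_ne_top_of_mem_Tdelta hf₁ hf₂⟩⟩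
end
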